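/- Let T₁ = (Φ₁,B₁,η₁,h₁) be a stochastic transformation from M to M' and T₂ = (Φ₂,B₂,η₂,h₂) a stochastic transformation from M' to M''. Then for every SDE (μ,σ) on M, E_{T₂}(E_{T₁}(μ,σ)) = E_{T₂∘T₁}(μ,σ), where T₂∘T₁ = (Φ₂∘Φ₁, (B₂∘Φ₁)·B₁, (η₂∘Φ₁)·η₁, √η₁·B₁⁻¹·(h₂∘Φ₁) + h₁). -/

import Mathlib

open Matrix

/-- Partial derivative `∂ᵢ f` of a scalar function on `ℝⁿ`. -/
noncomputable def pd {n : ℕ} (i : Fin n) (f : (Fin n → ℝ) → ℝ) (x : Fin n → ℝ) : ℝ :=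
  fderiv ℝ f x (Pi.single i 1)

/-- Action `Y(f) = Yⁱ ∂ᵢ f` of a vector field on a scalar function. -/
noncomputable def vfd {n : ℕ} (Y : (Fin n → ℝ) → Fin n → ℝ)
    (f : (Fin n → ℝ) → ℝ) (x : Fin n → ℝ) : ℝ :=
  ∑ j, Y x j * pd j f x

/-- Infinitesimal generator `L(f) = ½ (σσᵀ)^{ij} ∂ᵢ∂ⱼ f + μⁱ ∂ᵢ f` of the SDE `(μ,σ)`. -/
noncomputable def gen {n m : ℕ} (μ : (Fin n → ℝ) → Fin n → ℝ)
    (σ : (Fin n → ℝ) → Matrix (Fin n) (Fin m) ℝ)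
    (f : (Fin n → ℝ) → ℝ) (x : Fin n → ℝ) : ℝ :=
  (1 / 2) * ∑ i, ∑ j, (∑ α, σ x i α * σ x j α) * pd i (pd j f) x
    + ∑ i, μ x i * pd i f x

/-- Entrywise smoothness of a vector-valued function on a set. -/
def SmoothVec {n k : ℕ} (M : Set (Fin n → ℝ)) (f : (Fin n → ℝ) → Fin k → ℝ) : Prop :=
  ∀ i, ContDiffOn ℝ (⊤ : ℕ∞) (fun x => f x i) M

/-- Entrywise smoothness of a matrix-valued function on a set. -/
def SmoothMat {n k l : ℕ} (M : Set (Fin n → ℝ))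
    (f : (Fin n → ℝ) → Matrix (Fin k) (Fin l) ℝ) : Prop :=
  ∀ i j, ContDiffOn ℝ (⊤ : ℕ∞) (fun x => f x i j) M

/-- The drift of the transformed SDE `E_T(μ,σ)`:
`E_T(μ) = ((1/η)[L(Φ) + ∇Φ·σ·h]) ∘ Φ⁻¹`, where `Ψ = Φ⁻¹`. -/
noncomputable def ETmu {n m : ℕ} (Φ Ψ : (Fin n → ℝ) → Fin n → ℝ)
    (η : (Fin n → ℝ) → ℝ) (h : (Fin n → ℝ) → Fin m → ℝ)
    (μ : (Fin n → ℝ) → Fin n → ℝ) (σ : (Fin n → ℝ) → Matrix (Fin n) (Fin m) ℝ)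
    (y : Fin n → ℝ) : Fin n → ℝ := fun i =>
  (η (Ψ y))⁻¹ * (gen μ σ (fun z => Φ z i) (Ψ y)
    + ∑ j, ∑ α, pd j (fun z => Φ z i) (Ψ y) * σ (Ψ y) j α * h (Ψ y) α)

/-- The diffusion coefficient of the transformed SDE `E_T(μ,σ)`:
`E_T(σ) = ((1/√η)·∇Φ·σ·B⁻¹) ∘ Φ⁻¹`, where `Ψ = Φ⁻¹`. -/
noncomputable def ETsigma {n m : ℕ} (Φ Ψ : (Fin n → ℝ) → Fin n → ℝ)
    (B : (Fin n → ℝ) → Matrix (Fin m) (Fin m) ℝ) (η : (Fin n → ℝ) → ℝ)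
    (σ : (Fin n → ℝ) → Matrix (Fin n) (Fin m) ℝ)
    (y : Fin n → ℝ) : Matrix (Fin n) (Fin m) ℝ :=
  Matrix.of fun i α =>
    (Real.sqrt (η (Ψ y)))⁻¹ *
      ∑ j, ∑ β, pd j (fun z => Φ z i) (Ψ y) * σ (Ψ y) j β * (B (Ψ y))⁻¹ β α

/-!
Fix `y`, put `x = Ψ₁ (Ψ₂ y)` and let `J₁`, `J₂` be the Jacobians of `Φ₁` at `x` and of `Φ₂` at
`Φ₁ x`. At a point the generator is the constant-coefficient operator `½ aⁱʲ ∂ᵢ∂ⱼ + bⁱ ∂ᵢ` with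
`a = σσᵀ`, `b = μ`, and Itô's formula (the second-order chain rule) says that `L(f ∘ Φ)` is the
operator with coefficients `(J a Jᵀ, L(Φ))` applied to `f` at `Φ x`. As `B₁` is orthogonal,
`E_{T₁}(σ)` has diffusion matrix `η₁⁻¹ J₁ σσᵀ J₁ᵀ`, so the drift of `E_{T₂}(E_{T₁}(μ,σ))` is
`(η₂ η₁)⁻¹ (L(Φ₂ ∘ Φ₁) + J₂ J₁ σ h)` for the composite `h = √η₁ B₁⁻¹ h₂ + h₁`, whose factor `√η₁`
compensates the `1/√η₁` in `E_{T₁}(σ)`. The diffusion coefficients agree because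
`∇(Φ₂ ∘ Φ₁) = J₂ J₁` and `(B₂ B₁)⁻¹ = B₁⁻¹ B₂⁻¹`.
-/

section Calculus

variable {n k : ℕ}

noncomputable def grad (f : (Fin n → ℝ) → ℝ) (x : Fin n → ℝ) : Fin n → ℝ := fun i => pd i f x

noncomputable def hessian (f : (Fin n → ℝ) → ℝ) (x : Fin n → ℝ) : Matrix (Fin n) (Fin n) ℝ :=
  Matrix.of fun i j => pd i (pd j f) x

noncomputable def jac (Φ : (Fin n → ℝ) → Fin k → ℝ) (x : Fin n → ℝ) : Matrix (Fin k) (Fin n) ℝ :=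
  Matrix.of fun i j => pd j (fun z => Φ z i) x

lemma pd_congr {i : Fin n} {f g : (Fin n → ℝ) → ℝ} {x : Fin n → ℝ} (h : f =ᶠ[nhds x] g) :
    pd i f x = pd i g x := by
  rw [pd, pd, h.fderiv_eq]

lemma pd_mul {f g : (Fin n → ℝ) → ℝ} {x : Fin n → ℝ}
    (hf : DifferentiableAt ℝ f x) (hg : DifferentiableAt ℝ g x) (i : Fin n) :
    pd i (fun z => f z * g z) x = pd i f x * g x + f x * pd i g x := by
  simp only [pd, fderiv_fun_mul hf hg, _root_.add_apply, _root_.smul_apply, smul_eq_mul]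
  ring

lemma pd_sum {ι : Type*} {F : ι → (Fin n → ℝ) → ℝ} {x : Fin n → ℝ} (s : Finset ι)
    (hF : ∀ j ∈ s, DifferentiableAt ℝ (F j) x) (i : Fin n) :
    pd i (fun z => ∑ j ∈ s, F j z) x = ∑ j ∈ s, pd i (F j) x := by
  simp [pd, fderiv_fun_sum hF]

lemma ContDiffAt.differentiableAt_pd {f : (Fin n → ℝ) → ℝ} {x : Fin n → ℝ}
    (hf : ContDiffAt ℝ 2 f x) (i : Fin n) : DifferentiableAt ℝ (pd i f) x :=
  ((hf.fderiv_right le_rfl).differentiableAt one_ne_zero).clm_apply (differentiableAt_const _)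

lemma fderiv_apply_eq_sum_pd {f : (Fin n → ℝ) → ℝ} (x v : Fin n → ℝ) :
    fderiv ℝ f x v = ∑ j, v j * pd j f x := by
  conv_lhs => rw [pi_eq_sum_univ' v, map_sum]
  simp [pd]

lemma fderiv_single_apply {Φ : (Fin n → ℝ) → Fin k → ℝ} {x : Fin n → ℝ}
    (hΦ : DifferentiableAt ℝ Φ x) (l : Fin n) (j : Fin k) :
    fderiv ℝ Φ x (Pi.single l 1) j = pd l (fun z => Φ z j) x := by
  rw [pd, fderiv_apply hΦ]
  rfl

lemma pd_comp {f : (Fin k → ℝ) → ℝ} {Φ : (Fin n → ℝ) → Fin k → ℝ} {x : Fin n → ℝ}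
    (hf : DifferentiableAt ℝ f (Φ x)) (hΦ : DifferentiableAt ℝ Φ x) (l : Fin n) :
    pd l (fun z => f (Φ z)) x = ∑ j, pd j f (Φ x) * pd l (fun z => Φ z j) x := by
  rw [pd, fderiv_fun_comp x hf hΦ, ContinuousLinearMap.comp_apply, fderiv_apply_eq_sum_pd]
  simp only [fderiv_single_apply hΦ, mul_comm]

lemma grad_comp {f : (Fin k → ℝ) → ℝ} {Φ : (Fin n → ℝ) → Fin k → ℝ} {x : Fin n → ℝ}
    (hf : DifferentiableAt ℝ f (Φ x)) (hΦ : DifferentiableAt ℝ Φ x) :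
    grad (fun z => f (Φ z)) x = grad f (Φ x) ᵥ* jac Φ x := by
  ext l
  simp [grad, pd_comp hf hΦ, vecMul, dotProduct, jac]

lemma jac_comp {l : ℕ} {Ψ : (Fin k → ℝ) → Fin l → ℝ} {Φ : (Fin n → ℝ) → Fin k → ℝ}
    {x : Fin n → ℝ} (hΨ : DifferentiableAt ℝ Ψ (Φ x)) (hΦ : DifferentiableAt ℝ Φ x) :
    jac (fun z => Ψ (Φ z)) x = jac Ψ (Φ x) * jac Φ x := by
  ext i j
  simp [jac, Matrix.mul_apply, pd_comp (differentiableAt_pi.1 hΨ i) hΦ]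

lemma hessian_comp {f : (Fin k → ℝ) → ℝ} {Φ : (Fin n → ℝ) → Fin k → ℝ} {x : Fin n → ℝ}
    (hf : ContDiffAt ℝ 2 f (Φ x)) (hΦ : ContDiffAt ℝ 2 Φ x) :
    hessian (fun z => f (Φ z)) x = (jac Φ x)ᵀ * hessian f (Φ x) * jac Φ x
      + ∑ p, grad f (Φ x) p • hessian (fun z => Φ z p) x := by
  have hΦp : ∀ p, ContDiffAt ℝ 2 (fun z => Φ z p) x := contDiffAt_pi.1 hΦ
  have hdf : ∀ j, DifferentiableAt ℝ (fun z => pd j f (Φ z)) x := fun j =>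
    (hf.differentiableAt_pd j).comp x (hΦ.differentiableAt two_ne_zero)
  ext a b
  have hgrad : pd b (fun z => f (Φ z)) =ᶠ[nhds x]
      fun z => ∑ j, pd j f (Φ z) * pd b (fun z => Φ z j) z := by
    filter_upwards [hΦ.continuousAt.eventually (hf.eventually (by simp)), hΦ.eventually (by simp)]
      with z hfz hΦz
    exact pd_comp (hfz.differentiableAt two_ne_zero) (hΦz.differentiableAt two_ne_zero) b
  rw [hessian, of_apply, pd_congr hgrad,
    pd_sum _ (fun j _ => (hdf j).fun_mul ((hΦp j).differentiableAt_pd b)) a]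
  simp only [pd_mul (hdf _) ((hΦp _).differentiableAt_pd b),
    pd_comp (hf.differentiableAt_pd _) (hΦ.differentiableAt two_ne_zero)]
  simp [Matrix.mul_apply, Matrix.sum_apply, hessian, jac, grad, Finset.sum_add_distrib,
    Finset.sum_mul, mul_comm, mul_left_comm]

-- The generator with its coefficients `a = σσᵀ`, `b = μ` frozen at one point;
-- `trace (a * Hᵀ) = ∑ i j, a i j * H i j`.
noncomputable def diffOp (a : Matrix (Fin n) (Fin n) ℝ) (b : Fin n → ℝ)
    (f : (Fin n → ℝ) → ℝ) (x : Fin n → ℝ) : ℝ :=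
  (1 / 2) * trace (a * (hessian f x)ᵀ) + b ⬝ᵥ grad f x

lemma gen_eq_diffOp {m : ℕ} (μ : (Fin n → ℝ) → Fin n → ℝ)
    (σ : (Fin n → ℝ) → Matrix (Fin n) (Fin m) ℝ) (f : (Fin n → ℝ) → ℝ) (x : Fin n → ℝ) :
    gen μ σ f x = diffOp (σ x * (σ x)ᵀ) (μ x) f x := by
  simp [gen, diffOp, trace, Matrix.mul_apply, hessian, grad, dotProduct]

lemma diffOp_smul_add (c : ℝ) (a : Matrix (Fin n) (Fin n) ℝ) (b v : Fin n → ℝ)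
    (f : (Fin n → ℝ) → ℝ) (x : Fin n → ℝ) :
    diffOp (c • a) (c • b + v) f x = c * diffOp a b f x + v ⬝ᵥ grad f x := by
  simp only [diffOp, Matrix.smul_mul, trace_smul, add_dotProduct, smul_dotProduct, smul_eq_mul]
  ring

-- Itô's formula: `L(f ∘ Φ)` is the generator of the image of the diffusion under `Φ`.
lemma diffOp_comp {f : (Fin k → ℝ) → ℝ} {Φ : (Fin n → ℝ) → Fin k → ℝ} {x : Fin n → ℝ}
    (hf : ContDiffAt ℝ 2 f (Φ x)) (hΦ : ContDiffAt ℝ 2 Φ x)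
    (a : Matrix (Fin n) (Fin n) ℝ) (b : Fin n → ℝ) :
    diffOp a b (fun z => f (Φ z)) x =
      diffOp (jac Φ x * a * (jac Φ x)ᵀ) (fun p => diffOp a b (fun z => Φ z p) x) f (Φ x) := by
  rw [diffOp, hessian_comp hf hΦ,
    grad_comp (hf.differentiableAt two_ne_zero) (hΦ.differentiableAt two_ne_zero)]
  set J := jac Φ x
  have htrace : trace (a * (Jᵀ * hessian f (Φ x) * J)ᵀ)
      = trace (J * a * Jᵀ * (hessian f (Φ x))ᵀ) := by
    rw [transpose_mul, transpose_mul, transpose_transpose, ← Matrix.mul_assoc, ← Matrix.mul_assoc,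
      trace_mul_comm, ← Matrix.mul_assoc, ← Matrix.mul_assoc]
  have hdrift : b ⬝ᵥ (grad f (Φ x) ᵥ* J) = ∑ p, b ⬝ᵥ J p * grad f (Φ x) p := by
    rw [dotProduct_comm, ← dotProduct_mulVec]
    simp [dotProduct, mulVec, mul_comm]
  simp only [diffOp, transpose_add, transpose_sum, transpose_smul, Matrix.mul_add, Matrix.mul_sum,
    Matrix.mul_smul, trace_add, trace_sum, trace_smul, htrace, hdrift]
  rw [dotProduct, mul_add, Finset.mul_sum, add_assoc, ← Finset.sum_add_distrib]
  congr 1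
  refine Finset.sum_congr rfl fun p _ => ?_
  rw [smul_eq_mul]
  change _ = (_ + b ⬝ᵥ J p) * _
  ring

end Calculus

section Transform

variable {n m : ℕ} {Φ Ψ : (Fin n → ℝ) → Fin n → ℝ} {y x : Fin n → ℝ}

lemma ETsigma_eq (hx : Ψ y = x) (B : (Fin n → ℝ) → Matrix (Fin m) (Fin m) ℝ)
    (η : (Fin n → ℝ) → ℝ) (σ : (Fin n → ℝ) → Matrix (Fin n) (Fin m) ℝ) :
    ETsigma Φ Ψ B η σ y = (√(η x))⁻¹ • (jac Φ x * σ x * (B x)⁻¹) := by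
  subst hx
  ext i α
  simp only [ETsigma, of_apply, Matrix.smul_apply, smul_eq_mul, Matrix.mul_apply, jac,
    Finset.sum_mul]
  rw [Finset.sum_comm]

lemma ETmu_eq (hx : Ψ y = x) (η : (Fin n → ℝ) → ℝ) (h : (Fin n → ℝ) → Fin m → ℝ)
    (μ : (Fin n → ℝ) → Fin n → ℝ) (σ : (Fin n → ℝ) → Matrix (Fin n) (Fin m) ℝ) :
    ETmu Φ Ψ η h μ σ y = (η x)⁻¹ •
      ((fun i => diffOp (σ x * (σ x)ᵀ) (μ x) (fun z => Φ z i) x) + (jac Φ x * σ x) *ᵥ h x) := by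
  subst hx
  ext i
  simp only [ETmu, gen_eq_diffOp, Pi.smul_apply, Pi.add_apply, smul_eq_mul, mulVec, dotProduct,
    Matrix.mul_apply, jac, of_apply, Finset.sum_mul]
  rw [Finset.sum_comm]

lemma ETsigma_mul_transpose (hx : Ψ y = x) {B : (Fin n → ℝ) → Matrix (Fin m) (Fin m) ℝ}
    (hB : B x * (B x)ᵀ = 1) {η : (Fin n → ℝ) → ℝ} (hη : 0 ≤ η x)
    (σ : (Fin n → ℝ) → Matrix (Fin n) (Fin m) ℝ) :
    ETsigma Φ Ψ B η σ y * (ETsigma Φ Ψ B η σ y)ᵀ =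
      (η x)⁻¹ • (jac Φ x * (σ x * (σ x)ᵀ) * (jac Φ x)ᵀ) := by
  have hBinv : (B x)⁻¹ * ((B x)⁻¹)ᵀ = 1 := by
    rw [inv_eq_right_inv hB, transpose_transpose, mul_eq_one_comm.mp hB]
  rw [ETsigma_eq hx, transpose_smul, Matrix.smul_mul, Matrix.mul_smul, smul_smul, ← mul_inv,
    Real.mul_self_sqrt hη]
  congr 1
  simp only [transpose_mul, Matrix.mul_assoc]
  rw [← Matrix.mul_assoc (B x)⁻¹, hBinv, Matrix.one_mul]

end Transform

section Composition

variable {n m : ℕ} {Φ₁ Ψ₁ Φ₂ Ψ₂ : (Fin n → ℝ) → Fin n → ℝ}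
  {B₁ B₂ : (Fin n → ℝ) → Matrix (Fin m) (Fin m) ℝ} {η₁ η₂ : (Fin n → ℝ) → ℝ}
  {h₁ h₂ : (Fin n → ℝ) → Fin m → ℝ} {μ : (Fin n → ℝ) → Fin n → ℝ}
  {σ : (Fin n → ℝ) → Matrix (Fin n) (Fin m) ℝ} {y : Fin n → ℝ}

lemma ETsigma_comp (hinv : Φ₁ (Ψ₁ (Ψ₂ y)) = Ψ₂ y) (hΦ₁ : DifferentiableAt ℝ Φ₁ (Ψ₁ (Ψ₂ y)))
    (hΦ₂ : DifferentiableAt ℝ Φ₂ (Ψ₂ y)) (hη₁ : 0 ≤ η₁ (Ψ₁ (Ψ₂ y))) :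
    ETsigma Φ₂ Ψ₂ B₂ η₂ (ETsigma Φ₁ Ψ₁ B₁ η₁ σ) y =
      ETsigma (fun x => Φ₂ (Φ₁ x)) (fun z => Ψ₁ (Ψ₂ z))
        (fun x => B₂ (Φ₁ x) * B₁ x) (fun x => η₂ (Φ₁ x) * η₁ x) σ y := by
  set x := Ψ₁ (Ψ₂ y)
  have hxx : Ψ₁ (Φ₁ x) = x := by rw [hinv]
  rw [← hinv] at hΦ₂
  rw [ETsigma_eq hinv.symm, ETsigma_eq hxx, ETsigma_eq (Ψ := fun z => Ψ₁ (Ψ₂ z)) (x := x) rfl,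
    jac_comp hΦ₂ hΦ₁, Real.sqrt_mul' _ hη₁, mul_inv, Matrix.mul_inv_rev]
  simp only [Matrix.mul_smul, Matrix.smul_mul, smul_smul, Matrix.mul_assoc]

lemma ETmu_comp (hinv : Φ₁ (Ψ₁ (Ψ₂ y)) = Ψ₂ y) (hΦ₁ : ContDiffAt ℝ 2 Φ₁ (Ψ₁ (Ψ₂ y)))
    (hΦ₂ : ContDiffAt ℝ 2 Φ₂ (Ψ₂ y)) (hB₁ : B₁ (Ψ₁ (Ψ₂ y)) * (B₁ (Ψ₁ (Ψ₂ y)))ᵀ = 1)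
    (hη₁ : 0 ≤ η₁ (Ψ₁ (Ψ₂ y))) :
    ETmu Φ₂ Ψ₂ η₂ h₂ (ETmu Φ₁ Ψ₁ η₁ h₁ μ σ) (ETsigma Φ₁ Ψ₁ B₁ η₁ σ) y =
      ETmu (fun x => Φ₂ (Φ₁ x)) (fun z => Ψ₁ (Ψ₂ z)) (fun x => η₂ (Φ₁ x) * η₁ x)
        (fun x => √(η₁ x) • ((B₁ x)⁻¹ *ᵥ h₂ (Φ₁ x)) + h₁ x) μ σ y := by
  set x := Ψ₁ (Ψ₂ y)
  have hxx : Ψ₁ (Φ₁ x) = x := by rw [hinv]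
  rw [← hinv] at hΦ₂
  ext i
  rw [ETmu_eq hinv.symm, ETmu_eq (Ψ := fun z => Ψ₁ (Ψ₂ z)) (x := x) rfl,
    ETsigma_mul_transpose hxx hB₁ hη₁, ETmu_eq hxx, ETsigma_eq hxx,
    jac_comp (hΦ₂.differentiableAt two_ne_zero) (hΦ₁.differentiableAt two_ne_zero),
    smul_add (η₁ x)⁻¹]
  simp only [Pi.smul_apply, Pi.add_apply]
  rw [diffOp_smul_add, ← diffOp_comp (contDiffAt_pi.1 hΦ₂ i) hΦ₁]
  have hgrad : ∀ v, v ⬝ᵥ grad (fun z => Φ₂ z i) (Φ₁ x) = (jac Φ₂ (Φ₁ x) *ᵥ v) i :=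
    fun v => dotProduct_comm _ _
  simp only [hgrad, Matrix.mul_smul, Matrix.smul_mulVec, mulVec_smul, mulVec_add, mulVec_mulVec,
    Pi.add_apply, Pi.smul_apply, smul_eq_mul, Matrix.mul_assoc]
  rw [← Real.sqrt_div_self, div_eq_inv_mul, mul_inv]
  ring

end Composition

lemma SmoothVec.contDiffAt {n k : ℕ} {M : Set (Fin n → ℝ)} {f : (Fin n → ℝ) → Fin k → ℝ}
    (hf : SmoothVec M f) (hM : IsOpen M) {x : Fin n → ℝ} (hx : x ∈ M) : ContDiffAt ℝ 2 f x :=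
  contDiffAt_pi.2 fun i => ((hf i).contDiffAt (hM.mem_nhds hx)).of_le (by norm_cast)

theorem statement2_general {n m : ℕ}
    (M M' M'' : Set (Fin n → ℝ)) (hM : IsOpen M) (hM' : IsOpen M')
    (μ : (Fin n → ℝ) → Fin n → ℝ) (σ : (Fin n → ℝ) → Matrix (Fin n) (Fin m) ℝ)
    -- T₁ = (Φ₁, B₁, η₁, h₁) is a stochastic transformation from M to M', with Ψ₁ = Φ₁⁻¹
    (Φ₁ Ψ₁ : (Fin n → ℝ) → Fin n → ℝ)
    (B₁ : (Fin n → ℝ) → Matrix (Fin m) (Fin m) ℝ)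
    (η₁ : (Fin n → ℝ) → ℝ) (h₁ : (Fin n → ℝ) → Fin m → ℝ)
    (hΨ₁map : Set.MapsTo Ψ₁ M' M)
    (hΨ₁inv : ∀ y ∈ M', Φ₁ (Ψ₁ y) = y)
    (hΦ₁s : SmoothVec M Φ₁)
    (hSO₁ : ∀ x ∈ M, B₁ x * (B₁ x)ᵀ = 1 ∧ (B₁ x).det = 1) (hpos₁ : ∀ x ∈ M, 0 < η₁ x)
    -- T₂ = (Φ₂, B₂, η₂, h₂) is a stochastic transformation from M' to M'', with Ψ₂ = Φ₂⁻¹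
    (Φ₂ Ψ₂ : (Fin n → ℝ) → Fin n → ℝ)
    (B₂ : (Fin n → ℝ) → Matrix (Fin m) (Fin m) ℝ)
    (η₂ : (Fin n → ℝ) → ℝ) (h₂ : (Fin n → ℝ) → Fin m → ℝ)
    (hΨ₂map : Set.MapsTo Ψ₂ M'' M')
    (hΦ₂s : SmoothVec M' Φ₂) :
    ∀ y ∈ M'',
      (∀ i, ETmu Φ₂ Ψ₂ η₂ h₂ (ETmu Φ₁ Ψ₁ η₁ h₁ μ σ) (ETsigma Φ₁ Ψ₁ B₁ η₁ σ) y i =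
        ETmu (fun x => Φ₂ (Φ₁ x)) (fun z => Ψ₁ (Ψ₂ z))
          (fun x => η₂ (Φ₁ x) * η₁ x)
          (fun x => Real.sqrt (η₁ x) • ((B₁ x)⁻¹ *ᵥ h₂ (Φ₁ x)) + h₁ x) μ σ y i) ∧
      (∀ i α, ETsigma Φ₂ Ψ₂ B₂ η₂ (ETsigma Φ₁ Ψ₁ B₁ η₁ σ) y i α =
        ETsigma (fun x => Φ₂ (Φ₁ x)) (fun z => Ψ₁ (Ψ₂ z))
          (fun x => B₂ (Φ₁ x) * B₁ x) (fun x => η₂ (Φ₁ x) * η₁ x) σ y i α) := by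
  intro y hy
  have hx : Ψ₁ (Ψ₂ y) ∈ M := hΨ₁map (hΨ₂map hy)
  have hinv : Φ₁ (Ψ₁ (Ψ₂ y)) = Ψ₂ y := hΨ₁inv _ (hΨ₂map hy)
  have hΦ₁ := hΦ₁s.contDiffAt hM hx
  have hΦ₂ := hΦ₂s.contDiffAt hM' (hΨ₂map hy)
  have hη₁ := (hpos₁ _ hx).le
  refine ⟨fun i => ?_, fun i α => ?_⟩
  · rw [ETmu_comp hinv hΦ₁ hΦ₂ (hSO₁ _ hx).1 hη₁]
  · rw [ETsigma_comp hinv (hΦ₁.differentiableAt two_ne_zero) (hΦ₂.differentiableAt two_ne_zero)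
      hη₁]

/-- Composition of stochastic transformations at the level of SDEs:
`E_{T₂}(E_{T₁}(μ,σ)) = E_{T₂∘T₁}(μ,σ)`, where
`T₂∘T₁ = (Φ₂∘Φ₁, (B₂∘Φ₁)·B₁, (η₂∘Φ₁)·η₁, √η₁·B₁⁻¹·(h₂∘Φ₁) + h₁)`. -/
theorem statement2 {n m : ℕ}
    (M M' M'' : Set (Fin n → ℝ)) (hM : IsOpen M) (hM' : IsOpen M') (hM'' : IsOpen M'')
    (μ : (Fin n → ℝ) → Fin n → ℝ) (σ : (Fin n → ℝ) → Matrix (Fin n) (Fin m) ℝ)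
    (hμ : SmoothVec M μ) (hσ : SmoothMat M σ)
    -- T₁ = (Φ₁, B₁, η₁, h₁) is a stochastic transformation from M to M', with Ψ₁ = Φ₁⁻¹
    (Φ₁ Ψ₁ : (Fin n → ℝ) → Fin n → ℝ)
    (B₁ : (Fin n → ℝ) → Matrix (Fin m) (Fin m) ℝ)
    (η₁ : (Fin n → ℝ) → ℝ) (h₁ : (Fin n → ℝ) → Fin m → ℝ)
    (hΦ₁map : Set.MapsTo Φ₁ M M') (hΨ₁map : Set.MapsTo Ψ₁ M' M)
    (hΦ₁inv : ∀ x ∈ M, Ψ₁ (Φ₁ x) = x) (hΨ₁inv : ∀ y ∈ M', Φ₁ (Ψ₁ y) = y)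
    (hΦ₁s : SmoothVec M Φ₁) (hΨ₁s : SmoothVec M' Ψ₁)
    (hB₁s : SmoothMat M B₁) (hη₁s : ContDiffOn ℝ (⊤ : ℕ∞) η₁ M) (hh₁s : SmoothVec M h₁)
    (hSO₁ : ∀ x ∈ M, B₁ x * (B₁ x)ᵀ = 1 ∧ (B₁ x).det = 1) (hpos₁ : ∀ x ∈ M, 0 < η₁ x)
    -- T₂ = (Φ₂, B₂, η₂, h₂) is a stochastic transformation from M' to M'', with Ψ₂ = Φ₂⁻¹
    (Φ₂ Ψ₂ : (Fin n → ℝ) → Fin n → ℝ)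
    (B₂ : (Fin n → ℝ) → Matrix (Fin m) (Fin m) ℝ)
    (η₂ : (Fin n → ℝ) → ℝ) (h₂ : (Fin n → ℝ) → Fin m → ℝ)
    (hΦ₂map : Set.MapsTo Φ₂ M' M'') (hΨ₂map : Set.MapsTo Ψ₂ M'' M')
    (hΦ₂inv : ∀ x ∈ M', Ψ₂ (Φ₂ x) = x) (hΨ₂inv : ∀ y ∈ M'', Φ₂ (Ψ₂ y) = y)
    (hΦ₂s : SmoothVec M' Φ₂) (hΨ₂s : SmoothVec M'' Ψ₂)
    (hB₂s : SmoothMat M' B₂) (hη₂s : ContDiffOn ℝ (⊤ : ℕ∞) η₂ M') (hh₂s : SmoothVec M' h₂)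
    (hSO₂ : ∀ x ∈ M', B₂ x * (B₂ x)ᵀ = 1 ∧ (B₂ x).det = 1) (hpos₂ : ∀ x ∈ M', 0 < η₂ x) :
    ∀ y ∈ M'',
      (∀ i, ETmu Φ₂ Ψ₂ η₂ h₂ (ETmu Φ₁ Ψ₁ η₁ h₁ μ σ) (ETsigma Φ₁ Ψ₁ B₁ η₁ σ) y i =
        ETmu (fun x => Φ₂ (Φ₁ x)) (fun z => Ψ₁ (Ψ₂ z))
          (fun x => η₂ (Φ₁ x) * η₁ x)
          (fun x => Real.sqrt (η₁ x) • ((B₁ x)⁻¹ *ᵥ h₂ (Φ₁ x)) + h₁ x) μ σ y i) ∧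
      (∀ i α, ETsigma Φ₂ Ψ₂ B₂ η₂ (ETsigma Φ₁ Ψ₁ B₁ η₁ σ) y i α =
        ETsigma (fun x => Φ₂ (Φ₁ x)) (fun z => Ψ₁ (Ψ₂ z))
          (fun x => B₂ (Φ₁ x) * B₁ x) (fun x => η₂ (Φ₁ x) * η₁ x) σ y i α) :=
  statement2_general M M' M'' hM hM' μ σ Φ₁ Ψ₁ B₁ η₁ h₁ hΨ₁map hΨ₁inv hΦ₁s hSO₁ hpos₁ Φ₂ Ψ₂ B₂ η₂ h₂
    hΨ₂map hΦ₂s
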